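/- Let G be a connected locally finite graph of subexponential growth, i.e., for every c > 1 the growth function satisfies β(n) < c^n for all sufficiently large n. Then G does not contain a subgraph which is a bounded-degree tree with positive Cheeger constant. In particular, the Cayley graph of a finitely generated group of intermediate (hence subexponential) growth contains no tree with positive Cheeger constant. -/

import Mathlib

universe u

/-- A map between the vertex sets of two graphs (each vertex set carrying the combinatorial
metric `SimpleGraph.dist`) is a quasi-isometry. -/
def GraphQuasiIsometry {V : Type*} {V' : Type*} (G : SimpleGraph V) (G' : SimpleGraph V')
    (f : V → V') : Prop :=
  ∃ lam ε K : ℝ, 1 ≤ lam ∧ 0 ≤ ε ∧ 0 ≤ K ∧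
    (∀ x y : V,
      lam⁻¹ * (G.dist x y : ℝ) - ε ≤ (G'.dist (f x) (f y) : ℝ) ∧
      (G'.dist (f x) (f y) : ℝ) ≤ lam * (G.dist x y : ℝ) + ε) ∧
    (∀ v' : V', ∃ x : V, (G'.dist v' (f x) : ℝ) ≤ K)

/-- Two graphs are quasi-isometric (with their combinatorial metrics). -/
def QuasiIsometric {V V' : Type*} (G : SimpleGraph V) (G' : SimpleGraph V') : Prop :=
  ∃ f : V → V', GraphQuasiIsometry G G' f

/-- `G` has polynomial containment of degree at most `d`. -/
def HasPolyContainment {V : Type*} (G : SimpleGraph V) (d : ℕ) : Prop :=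
  ∃ C : ℝ, 0 < C ∧
    ∀ X₀ : Set V, X₀.Finite →
      ∃ (W : ℕ → Set V) (X : ℕ → Set V),
        X 0 = X₀ ∧
        (∀ n : ℕ, 1 ≤ n → (W n).Finite ∧ ((W n).ncard : ℝ) ≤ C * (n : ℝ) ^ d) ∧
        (∀ n : ℕ, X (n + 1) =
          {v : V | ∃ u ∈ X n, v = u ∨ G.Adj u v} \ (⋃ k ∈ Finset.Icc 1 (n + 1), W k)) ∧
        (∀ n : ℕ, Disjoint (X n) (W (n + 1))) ∧
        (∃ T : ℕ, 0 < T ∧ ∀ n : ℕ, T ≤ n → X n = X T)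

/-- `G` has all vertex degrees bounded above by some `D`. -/
def BoundedDegree {V : Type*} (G : SimpleGraph V) : Prop :=
  ∃ D : ℕ, ∀ v : V, (G.neighborSet v).Finite ∧ (G.neighborSet v).ncard ≤ D

/-- Number of vertices at distance at most `n` from the base vertex `g₀`. -/
noncomputable def growthFunction {V : Type*} (G : SimpleGraph V) (g₀ : V) (n : ℕ) : ℕ :=
  {v : V | G.dist g₀ v ≤ n}.ncard

/-- Edges of `G` with exactly one endpoint in `K`. -/
def edgeBoundary {V : Type*} (G : SimpleGraph V) (K : Set V) : Set (Sym2 V) :=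
  {e ∈ G.edgeSet | ∃ u v : V, e = s(u, v) ∧ u ∈ K ∧ v ∉ K}

/-- Cheeger constant of a graph. -/
noncomputable def cheegerConstant {V : Type*} (G : SimpleGraph V) : ℝ :=
  sInf {r : ℝ | ∃ K : Set V, K.Finite ∧ K.Nonempty ∧
    r = ((edgeBoundary G K).ncard : ℝ) / (K.ncard : ℝ)}

/-- Cayley graph of a group with respect to a set `S`. -/
def cayleyGraph (Γ : Type*) [Group Γ] (S : Set Γ) : SimpleGraph Γ :=
  SimpleGraph.fromRel (fun g h => ∃ s ∈ S, h = g * s)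

/-- Word length of `g` with respect to `S`. -/
noncomputable def wordLength {Γ : Type*} [Group Γ] (S : Set Γ) (g : Γ) : ℕ :=
  sInf {n : ℕ | ∃ l : List Γ, l.length = n ∧ (∀ x ∈ l, x ∈ S ∪ S⁻¹) ∧ l.prod = g}

def VirtuallyNilpotent (Γ : Type*) [Group Γ] : Prop :=
  ∃ H : Subgroup Γ, H.FiniteIndex ∧ Group.IsNilpotent H

/-- The infinite `δ`-regular tree. -/
def IsRegularTree {U : Type*} (T : SimpleGraph U) (δ : ℕ) : Prop :=
  Infinite U ∧ T.IsTree ∧ ∀ v : U, (T.neighborSet v).Finite ∧ (T.neighborSet v).ncard = δ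

/-- `a` and `b` generate a free semigroup of rank two. -/
def GeneratesFreeSemigroup {Γ : Type*} [Group Γ] (a b : Γ) : Prop :=
  Function.Injective
    (FreeSemigroup.lift (fun x : Bool => if x then a else b) : FreeSemigroup Bool →ₙ* Γ)

/-- Elementary amenable groups: the smallest class containing finite and abelian groups and
closed under subgroups, quotients, extensions and directed unions. -/
inductive ElementaryAmenable : (G : Type u) → [inst : Group G] → Prop
  | finite (G : Type u) [Group G] [Finite G] : ElementaryAmenable G
  | abelian (G : Type u) [Group G] (h : ∀ a b : G, a * b = b * a) : ElementaryAmenable G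
  | subgroup {G H : Type u} [Group G] [Group H] (f : H →* G) (hf : Function.Injective f)
      (hG : ElementaryAmenable G) : ElementaryAmenable H
  | quotient {G H : Type u} [Group G] [Group H] (f : G →* H) (hf : Function.Surjective f)
      (hG : ElementaryAmenable G) : ElementaryAmenable H
  | extension {G : Type u} [Group G] (N : Subgroup G) [N.Normal]
      (hN : ElementaryAmenable N) (hQ : ElementaryAmenable (G ⧸ N)) : ElementaryAmenable G
  | directedUnion {G : Type u} [Group G] {ι : Type u} (H : ι → Subgroup G)
      (hdir : ∀ i j, ∃ k, H i ≤ H k ∧ H j ≤ H k)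
      (hunion : ∀ g : G, ∃ i, g ∈ H i)
      (hEA : ∀ i, ElementaryAmenable (H i)) : ElementaryAmenable G

/-!
Let `T` be the tree, `D` a degree bound and `h > 0` its Cheeger constant. Every boundary edge of
the `T`-ball `Bₙ₊₁` about a vertex `u₀` leaves from the sphere `Bₙ₊₁ \ Bₙ`, so
`h |Bₙ₊₁| ≤ D (|Bₙ₊₁| - |Bₙ|)`, whence `|Bₙ₊₁| ≥ (1 + h / D) |Bₙ|`: the balls of `T` grow
exponentially. Distances in `T` dominate those in `G`, so `Bₙ` lies in the `G`-ball of radius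
`n + d(g₀, u₀)` about `g₀`, and `G` has exponential growth.
-/

theorem pow_mul_le_of_mul_le_succ {R : Type*} [Semiring R] [PartialOrder R] [IsOrderedRing R]
    {a : ℕ → R} {c : R} (hc : 0 ≤ c) (h : ∀ n, c * a n ≤ a (n + 1)) : ∀ n, c ^ n * a 0 ≤ a n
  | 0 => by simp
  | n + 1 => calc
    c ^ (n + 1) * a 0 = c * (c ^ n * a 0) := by rw [pow_succ', mul_assoc]
    _ ≤ c * a n := mul_le_mul_of_nonneg_left (pow_mul_le_of_mul_le_succ hc h n) hc
    _ ≤ a (n + 1) := h n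

theorem not_forall_exists_lt_pow_of_pow_le_add {f : ℕ → ℝ} {c : ℝ} (hc : 1 < c) (m : ℕ)
    (hf : ∀ n, c ^ n ≤ f (m + n)) :
    ¬ ∀ c' : ℝ, 1 < c' → ∃ N : ℕ, ∀ n : ℕ, N ≤ n → f n < c' ^ n := by
  intro hsub
  obtain ⟨N, hN⟩ := hsub √c (Real.lt_sqrt_of_sq_lt (by simpa using hc))
  set n := max N m
  have hle : √c ^ (m + n) ≤ c ^ n := calc
    √c ^ (m + n) ≤ √c ^ (2 * n) :=
      pow_le_pow_right₀ (Real.one_le_sqrt.mpr hc.le) (by omega)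
    _ = c ^ n := by rw [pow_mul, Real.sq_sqrt (by linarith)]
  exact (hf n).not_gt ((hN (m + n) (by omega)).trans_le hle)

namespace SimpleGraph

variable {V : Type*} {G : SimpleGraph V}

theorem Hom.dist_map_le {W : Type*} {G' : SimpleGraph W} (f : G →g G') {u v : V}
    (h : G.Reachable u v) : G'.dist (f u) (f v) ≤ G.dist u v := by
  obtain ⟨p, hp⟩ := h.exists_walk_length_eq_dist
  simpa [hp] using dist_le (p.map f)

theorem setOf_dist_le_zero (hG : G.Preconnected) (x : V) : {v | G.dist x v ≤ 0} = {x} := by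
  ext v
  rw [Set.mem_singleton_iff, eq_comm, ← (hG x v).dist_eq_zero_iff]
  exact Nat.le_zero

theorem setOf_dist_le_subset_succ (x : V) (n : ℕ) :
    {v | G.dist x v ≤ n} ⊆ {v | G.dist x v ≤ n + 1} :=
  fun _ hv => Nat.le_succ_of_le hv

theorem setOf_dist_le_succ_subset (hG : G.Preconnected) (x : V) (n : ℕ) :
    {v | G.dist x v ≤ n + 1} ⊆
      {v | G.dist x v ≤ n} ∪ ⋃ u ∈ {v | G.dist x v ≤ n}, G.neighborSet u := by
  intro v (hv : G.dist x v ≤ n + 1)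
  obtain ⟨p, hp⟩ := (hG v x).exists_walk_length_eq_dist
  cases p with
  | nil => exact Or.inl (by simp)
  | cons hadj q =>
    refine Or.inr (Set.mem_biUnion (x := _) ?_ hadj.symm)
    have hq : q.length ≤ n := by
      rw [Walk.length_cons, dist_comm] at hp
      omega
    simpa [dist_comm] using (dist_le q).trans hq

theorem finite_setOf_dist_le (hG : G.Preconnected) (hlf : ∀ v, (G.neighborSet v).Finite)
    (x : V) : ∀ n : ℕ, {v | G.dist x v ≤ n}.Finite
  | 0 => setOf_dist_le_zero hG x ▸ Set.finite_singleton x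
  | n + 1 =>
    have ih := finite_setOf_dist_le hG hlf x n
    (ih.union (ih.biUnion fun u _ => hlf u)).subset (setOf_dist_le_succ_subset hG x n)

theorem cheegerConstant_mul_ncard_le {K : Set V} (hK : K.Finite) (hne : K.Nonempty) :
    cheegerConstant G * K.ncard ≤ (edgeBoundary G K).ncard := by
  have hpos : (0 : ℝ) < K.ncard := by exact_mod_cast (Set.ncard_pos hK).mpr hne
  rw [← le_div_iff₀ hpos]
  exact csInf_le ⟨0, by rintro r ⟨K', -, -, rfl⟩; positivity⟩ ⟨K, hK, hne, rfl⟩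

theorem ncard_edgeBoundary_le {D : ℕ}
    (hD : ∀ v, (G.neighborSet v).Finite ∧ (G.neighborSet v).ncard ≤ D) {K A : Set V}
    (hA : A.Finite) (hKA : ∀ u v, G.Adj u v → u ∈ K → v ∉ K → u ∈ A) :
    (edgeBoundary G K).ncard ≤ A.ncard * D := by
  let incident (a : V) : Set (Sym2 V) := (fun w => s(a, w)) '' G.neighborSet a
  have hsub : edgeBoundary G K ⊆ ⋃ a ∈ hA.toFinset, incident a := by
    rintro e ⟨he, u, v, rfl, hu, hv⟩
    exact Set.mem_biUnion (by simpa using hKA u v he hu hv) ⟨v, he, rfl⟩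
  calc (edgeBoundary G K).ncard
      ≤ (⋃ a ∈ hA.toFinset, incident a).ncard :=
        Set.ncard_le_ncard hsub (hA.toFinset.finite_toSet.biUnion fun a _ => (hD a).1.image _)
    _ ≤ ∑ a ∈ hA.toFinset, (incident a).ncard := hA.toFinset.set_ncard_biUnion_le _
    _ ≤ hA.toFinset.card * D :=
        Finset.sum_le_card_nsmul _ _ _ fun a _ => (Set.ncard_image_le (hD a).1).trans (hD a).2
    _ = A.ncard * D := by rw [Set.ncard_eq_toFinset_card A hA]

theorem cheegerConstant_mul_ncard_setOf_dist_le_succ_le (hG : G.Preconnected) {D : ℕ}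
    (hD : ∀ v, (G.neighborSet v).Finite ∧ (G.neighborSet v).ncard ≤ D) (u₀ : V) (n : ℕ) :
    cheegerConstant G * {v | G.dist u₀ v ≤ n + 1}.ncard ≤
      D * (({v | G.dist u₀ v ≤ n + 1}.ncard : ℝ) - {v | G.dist u₀ v ≤ n}.ncard) := by
  have hfin := finite_setOf_dist_le hG (fun v => (hD v).1) u₀
  have hsphere : ∀ u w, G.Adj u w → u ∈ {v | G.dist u₀ v ≤ n + 1} →
      w ∉ {v | G.dist u₀ v ≤ n + 1} → u ∈ {v | G.dist u₀ v ≤ n + 1} \ {v | G.dist u₀ v ≤ n} := by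
    intro u w hadj hu hw
    refine ⟨hu, fun (hun : G.dist u₀ u ≤ n) => hw ?_⟩
    have := hadj.diff_dist_adj (u := u₀)
    simp only [Set.mem_ofPred_eq]
    omega
  calc cheegerConstant G * {v | G.dist u₀ v ≤ n + 1}.ncard
      ≤ (edgeBoundary G {v | G.dist u₀ v ≤ n + 1}).ncard :=
        cheegerConstant_mul_ncard_le (hfin _) ⟨u₀, by simp⟩
    _ ≤ (({v | G.dist u₀ v ≤ n + 1} \ {v | G.dist u₀ v ≤ n}).ncard * D : ℕ) := by
        exact_mod_cast ncard_edgeBoundary_le hD (hfin _).sdiff hsphere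
    _ = D * (({v | G.dist u₀ v ≤ n + 1}.ncard : ℝ) - {v | G.dist u₀ v ≤ n}.ncard) := by
        push_cast
        rw [Set.cast_ncard_sdiff (setOf_dist_le_subset_succ u₀ n) (hfin _), mul_comm]

theorem Preconnected.exists_one_lt_pow_le_ncard_setOf_dist_le (hG : G.Preconnected) {D : ℕ}
    (hD : ∀ v, (G.neighborSet v).Finite ∧ (G.neighborSet v).ncard ≤ D)
    (hh : 0 < cheegerConstant G) (u₀ : V) :
    ∃ c : ℝ, 1 < c ∧ ∀ n : ℕ, c ^ n ≤ {v | G.dist u₀ v ≤ n}.ncard := by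
  set a : ℕ → ℝ := fun n => {v | G.dist u₀ v ≤ n}.ncard with ha
  set h := cheegerConstant G
  have hfin := finite_setOf_dist_le hG (fun v => (hD v).1) u₀
  have ha0 : a 0 = 1 := by simp only [ha, setOf_dist_le_zero hG, Set.ncard_singleton, Nat.cast_one]
  have hmono (n : ℕ) : a n ≤ a (n + 1) :=
    Nat.cast_le.mpr (Set.ncard_le_ncard (setOf_dist_le_subset_succ u₀ n) (hfin _))
  have hstep (n : ℕ) : h * a n ≤ D * (a (n + 1) - a n) :=
    (mul_le_mul_of_nonneg_left (hmono n) hh.le).trans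
      (cheegerConstant_mul_ncard_setOf_dist_le_succ_le hG hD u₀ n)
  have hDpos : (0 : ℝ) < D := by
    refine Nat.cast_pos.mpr (Nat.pos_of_ne_zero fun hD0 => ?_)
    have := hstep 0
    rw [ha0, mul_one, hD0, Nat.cast_zero, zero_mul] at this
    exact this.not_gt hh
  refine ⟨1 + h / D, lt_add_of_pos_right 1 (div_pos hh hDpos), fun n => ?_⟩
  have hgeom : ∀ n, (1 + h / D) * a n ≤ a (n + 1) := fun n => calc
    (1 + h / D) * a n = a n + h * a n / D := by ring
    _ ≤ a n + (a (n + 1) - a n) := by gcongr; exact (div_le_iff₀' hDpos).mpr (hstep n)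
    _ = a (n + 1) := by ring
  simpa [ha0] using pow_mul_le_of_mul_le_succ (by positivity) hgeom n

theorem Subgraph.ncard_setOf_dist_le_le_growthFunction (hG : G.Preconnected)
    (hlf : ∀ v, (G.neighborSet v).Finite) {H : G.Subgraph} (hH : H.coe.Preconnected) (g₀ : V)
    (u₀ : H.verts) (n : ℕ) :
    {v | H.coe.dist u₀ v ≤ n}.ncard ≤ growthFunction G g₀ (G.dist g₀ u₀ + n) := by
  rw [← Set.ncard_image_of_injective _ Subtype.val_injective]
  refine Set.ncard_le_ncard ?_ (finite_setOf_dist_le hG hlf g₀ _)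
  rintro _ ⟨v, hv : H.coe.dist u₀ v ≤ n, rfl⟩
  have htri := (hG g₀ u₀).dist_triangle_left (v : V)
  have hsub : G.dist u₀ v ≤ H.coe.dist u₀ v := H.hom.dist_map_le (hH u₀ v)
  simp only [Set.mem_ofPred_eq]
  omega

end SimpleGraph

/-- a connected locally finite graph of subexponential growth contains no
bounded-degree tree subgraph with positive Cheeger constant. -/
theorem subexponential_growth_no_positive_cheeger_tree {V : Type u} (G : SimpleGraph V)
    (hconn : G.Connected) (hlf : G.LocallyFinite) (g₀ : V)
    (hsub : ∀ c : ℝ, 1 < c → ∃ N : ℕ, ∀ n : ℕ, N ≤ n →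
      ((growthFunction G g₀ n : ℝ) < c ^ n)) :
    ¬ ∃ H : G.Subgraph, H.coe.IsTree ∧ BoundedDegree H.coe ∧
        0 < cheegerConstant H.coe := by
  rintro ⟨H, htree, ⟨D, hD⟩, hpos⟩
  have hH := htree.connected
  obtain ⟨u₀⟩ := hH.nonempty
  obtain ⟨c, hc, hgrowth⟩ := hH.preconnected.exists_one_lt_pow_le_ncard_setOf_dist_le hD hpos u₀
  refine not_forall_exists_lt_pow_of_pow_le_add hc (G.dist g₀ u₀) (fun n => ?_) hsub
  have hGlf (v : V) : (G.neighborSet v).Finite := letI := hlf v; (G.neighborSet v).toFinite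
  exact (hgrowth n).trans <| mod_cast
    H.ncard_setOf_dist_le_le_growthFunction hconn.preconnected hGlf hH.preconnected g₀ u₀ n
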